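/- arXiv:1401.4498 — 2 statements merged into one kernel-verified Lean document; each statement's English description precedes it below -/
import Mathlib

section
/- Let a ≥ e^{(β+1)²} be a positive integer and β > 0. Then there exists a constant c = c(β) such that ∑_{l > a} l^β e^{-(log l)^{3/2}} ≤ c · a^{β+1} e^{-(log a)^{3/2}}. -/
/-!
Write `L = log a`. By convexity, `(log l) ^ (3/2)` lies above its tangent line at `L`, so every term
`l ^ β * exp (-(log l) ^ (3/2))` is at most `exp (L ^ (3/2) / 2) * l ^ (-(r + 1))` with
`r = 3/2 * √L - β - 1`, and `a ≥ exp ((β + 1) ^ 2)` makes `r ≥ 1/2`. Then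
`l ^ (-(r + 1)) ≤ 2 * ((l - 1) ^ (-r) - l ^ (-r))`, so the tail telescopes to
`2 * exp (L ^ (3/2) / 2) * a ^ (-r) = 2 * a ^ (β + 1) * exp (-L ^ (3/2))`, and `c = 2` works.
-/

open Real Finset

lemma rpow_add_mul_sub_le_rpow {p L t : ℝ} (hp : 1 ≤ p) (hL : 0 < L) (ht : 0 ≤ t) :
    L ^ p + p * L ^ (p - 1) * (t - L) ≤ t ^ p := by
  have h := one_add_mul_self_le_rpow_one_add (s := t / L - 1) (by linarith [div_nonneg ht hL.le]) hp
  rw [add_sub_cancel, div_rpow ht hL.le, le_div_iff₀ (by positivity)] at h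
  calc L ^ p + p * L ^ (p - 1) * (t - L) = (1 + p * (t / L - 1)) * L ^ p := by
        rw [rpow_sub_one hL.ne']; field_simp
    _ ≤ t ^ p := h

lemma mul_rpow_neg_add_one_le_sub {r x : ℝ} (hr : 0 ≤ r) (hx : 1 < x) :
    r * x ^ (-(r + 1)) ≤ (x - 1) ^ (-r) - x ^ (-r) := by
  have hx0 : 0 < x := by linarith
  have hx1 : 0 < x - 1 := by linarith
  have hlog : x⁻¹ ≤ log x - log (x - 1) := by
    have := one_sub_inv_le_log_of_pos (div_pos hx0 hx1)
    rw [inv_div, log_div hx0.ne' hx1.ne'] at this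
    rw [show 1 - (x - 1) / x = x⁻¹ by field_simp; ring] at this
    exact this
  have hbernoulli : x ^ (-r) * (1 + r * x⁻¹) ≤ (x - 1) ^ (-r) := by
    rw [rpow_def_of_pos hx1, rpow_def_of_pos hx0]
    calc exp (log x * -r) * (1 + r * x⁻¹) ≤ exp (log x * -r) * exp (r * x⁻¹) := by
          gcongr; linarith [add_one_le_exp (r * x⁻¹)]
      _ ≤ exp (log (x - 1) * -r) := by
          rw [← exp_add]; gcongr; nlinarith
  rw [neg_add, rpow_add hx0, rpow_neg_one]
  nlinarith

lemma rpow_mul_exp_neg_log_rpow_le {β p L x : ℝ} (hp : 1 ≤ p) (hL : 0 < L) (hx : 1 ≤ x) :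
    x ^ β * exp (-log x ^ p) ≤ exp ((p - 1) * L ^ p) * x ^ (β - p * L ^ (p - 1)) := by
  have hx0 : 0 < x := by linarith
  have htan := rpow_add_mul_sub_le_rpow hp hL (log_nonneg hx)
  have hLp : L ^ p = L ^ (p - 1) * L := by rw [rpow_sub_one hL.ne']; field_simp
  rw [rpow_def_of_pos hx0, rpow_def_of_pos hx0, ← exp_add, ← exp_add]
  refine exp_le_exp.2 ?_
  nlinarith

lemma tsum_subtype_lt_le_of_le_sub {f g : ℕ → ℝ} {a : ℕ} (hf : ∀ n, 0 ≤ f n) (hg : ∀ n, 0 ≤ g n)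
    (hfg : ∀ n, a ≤ n → f (n + 1) ≤ g n - g (n + 1)) :
    ∑' l : {l : ℕ // a < l}, f l ≤ g a := by
  let e : ℕ ≃ {l : ℕ // a < l} :=
    ⟨fun n => ⟨a + n + 1, by omega⟩, fun l => l - a - 1, fun n => by simp only; omega,
      fun l => Subtype.ext (by have := l.2; simp only; omega)⟩
  rw [← e.tsum_eq]
  refine Real.tsum_le_of_sum_range_le (fun n => hf _) fun N => ?_
  calc ∑ n ∈ range N, f (a + n + 1) ≤ ∑ n ∈ range N, (g (a + n) - g (a + n + 1)) :=
        sum_le_sum fun n _ => hfg _ (by omega)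
    _ = g a - g (a + N) := sum_range_sub' (fun n => g (a + n)) N
    _ ≤ g a := by linarith [hg (a + N)]

theorem tsum_rpow_mul_exp_neg_log_rpow_le {β p : ℝ} {a : ℕ} (hp : 1 ≤ p) (hL : 0 < log a)
    (hdecay : β + 3 / 2 ≤ p * log a ^ (p - 1)) :
    ∑' l : {l : ℕ // a < l}, ((l : ℕ) : ℝ) ^ β * exp (-log ((l : ℕ) : ℝ) ^ p)
      ≤ 2 * (a : ℝ) ^ (β + 1) * exp (-log (a : ℝ) ^ p) := by
  have ha : (1 : ℝ) ≤ a := ((log_pos_iff (Nat.cast_nonneg a)).1 hL).le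
  set L := log a with hL_def
  set r := p * L ^ (p - 1) - β - 1 with hr_def
  set C := exp ((p - 1) * L ^ p)
  refine (tsum_subtype_lt_le_of_le_sub (f := fun n : ℕ => (n : ℝ) ^ β * exp (-log (n : ℝ) ^ p))
    (g := fun n => 2 * C * (n : ℝ) ^ (-r)) (fun n => by positivity) (fun n => by positivity)
    fun n hn => ?_).trans_eq ?_
  · have hn1 : (1 : ℝ) < n + 1 := by
      have : (a : ℝ) ≤ n := by exact_mod_cast hn
      linarith
    push_cast
    calc ((n : ℝ) + 1) ^ β * exp (-log ((n : ℝ) + 1) ^ p)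
        ≤ C * ((n : ℝ) + 1) ^ (-(r + 1)) := by
          convert rpow_mul_exp_neg_log_rpow_le hp hL hn1.le using 3; ring
      _ ≤ C * (2 * (r * ((n : ℝ) + 1) ^ (-(r + 1)))) := by
          gcongr; nlinarith [rpow_nonneg (by linarith : (0 : ℝ) ≤ n + 1) (-(r + 1))]
      _ ≤ C * (2 * ((n + 1 - 1) ^ (-r) - (n + 1) ^ (-r))) := by
          gcongr; exact mul_rpow_neg_add_one_le_sub (by linarith) hn1
      _ = 2 * C * (n : ℝ) ^ (-r) - 2 * C * ((n : ℝ) + 1) ^ (-r) := by ring_nf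
  · have ha0 : (0 : ℝ) < a := by linarith
    rw [rpow_def_of_pos ha0, rpow_def_of_pos ha0, mul_assoc, ← exp_add, mul_assoc, ← exp_add,
      ← hL_def, hr_def, rpow_sub_one hL.ne']
    congr 2
    field_simp
    ring

theorem stmt0 (β : ℝ) (hβ : 0 < β) :
    ∃ c : ℝ, 0 < c ∧ ∀ a : ℕ, 0 < a → Real.exp ((β + 1) ^ 2) ≤ (a : ℝ) →
      (∑' l : {l : ℕ // a < l},
          ((l : ℕ) : ℝ) ^ β * Real.exp (-(Real.log ((l : ℕ) : ℝ)) ^ ((3 : ℝ) / 2)))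
        ≤ c * (a : ℝ) ^ (β + 1) * Real.exp (-(Real.log (a : ℝ)) ^ ((3 : ℝ) / 2)) := by
  refine ⟨2, two_pos, fun a ha hae => ?_⟩
  have hlog : (β + 1) ^ 2 ≤ log a := (le_log_iff_exp_le (by exact_mod_cast ha)).2 hae
  refine tsum_rpow_mul_exp_neg_log_rpow_le (by norm_num) (lt_of_lt_of_le (by positivity) hlog) ?_
  have hsqrt : β + 1 ≤ log a ^ ((3 : ℝ) / 2 - 1) := by
    rw [show (3 : ℝ) / 2 - 1 = 1 / 2 by norm_num, ← sqrt_eq_rpow]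
    exact le_sqrt_of_sq_le hlog
  linarith
end

section
/- Let (X_i)_{i∈ℕ} be independent real random variables with E[X_i] = 0 for all i and sup_i E[exp{K (log⁺|X_i|)^γ}] < ∞ for some K > 0 and γ > 1, where log⁺ x = max(log x, 0). Then for all ε > 0 there exists c > 0 such that for all n ∈ ℕ: P(∃ k ≥ n : |∑_{i=1}^k X_i| > εk) ≤ c^{−1} e^{−c (log n)^γ}. -/
/-!
Fix `ε` and a large `k`, and truncate every `X i` at `T = k^{1/4}`. Markov's inequality for the
weight `w(x) = exp (K (log⁺ |x|)^γ)` shows that some `|X i|`, `i < k`, exceeds `T` with probability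
at most `k M exp (-K (log k / 4)^γ)`, which is `O(exp (-a (log k)^γ))` because `γ > 1`. Since
`x² ≤ D w(x)`, truncation moves each mean by at most `D M / T`, eventually less than `ε / 2`, and
Hoeffding's inequality for the truncated variables (bounded by `T`) gives `exp (-ε² √k / 8)`.
Hence `P(|S_k| > ε k) ≤ C exp (-a (log k)^γ)` for large `k`, and then for all `k` after enlarging
`C`. Finally `exp (-a (log k)^γ) ≤ exp (-a/2 (log n)^γ) exp (-a/2 (log k)^γ)` for `k ≥ n`, and the
last factor is summable, so a union bound over `k ≥ n` gives the claim.
-/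

open MeasureTheory ProbabilityTheory

open Filter Real Finset

lemma eventually_le_mul_rpow {a γ : ℝ} (ha : 0 < a) (hγ : 1 < γ) :
    ∀ᶠ u : ℝ in atTop, u ≤ a * u ^ γ := by
  filter_upwards [(tendsto_rpow_atTop (sub_pos.2 hγ)).eventually_ge_atTop a⁻¹,
    eventually_gt_atTop 0] with u hu hu0
  calc u = a * a⁻¹ * u := by field_simp
    _ ≤ a * u ^ (γ - 1) * u := by gcongr
    _ = a * u ^ γ := by rw [mul_assoc, ← rpow_add_one hu0.ne']; ring_nf

lemma eventually_log_le_mul_log_rpow {a γ : ℝ} (ha : 0 < a) (hγ : 1 < γ) :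
    ∀ᶠ k : ℕ in atTop, log k ≤ a * log k ^ γ :=
  (tendsto_log_atTop.comp tendsto_natCast_atTop_atTop).eventually (eventually_le_mul_rpow ha hγ)

lemma eventually_mul_log_rpow_le_sqrt {a γ b : ℝ} (ha : 0 < a) (hb : 0 < b) :
    ∀ᶠ k : ℕ in atTop, a * log k ^ γ ≤ b * (k : ℝ) ^ (2⁻¹ : ℝ) := by
  have h := ((isLittleO_log_rpow_rpow_atTop γ (by norm_num : (0 : ℝ) < 2⁻¹)).bound
    (div_pos hb ha))
  filter_upwards [tendsto_natCast_atTop_atTop.eventually h] with k hk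
  rw [norm_of_nonneg (rpow_nonneg (Nat.cast_nonneg k) _)] at hk
  calc a * log k ^ γ ≤ a * (b / a * (k : ℝ) ^ (2⁻¹ : ℝ)) :=
        mul_le_mul_of_nonneg_left ((le_abs_self _).trans hk) ha.le
    _ = b * (k : ℝ) ^ (2⁻¹ : ℝ) := by field_simp

lemma log_rpow_mono {γ : ℝ} (hγ : 0 ≤ γ) {n k : ℕ} (h : n ≤ k) : log n ^ γ ≤ log k ^ γ := by
  refine rpow_le_rpow (log_natCast_nonneg n) ?_ hγ
  rcases n.eq_zero_or_pos with rfl | hn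
  · simpa using log_natCast_nonneg k
  · exact log_le_log (by exact_mod_cast hn) (by exact_mod_cast h)

lemma summable_exp_neg_mul_log_rpow {a γ : ℝ} (ha : 0 < a) (hγ : 1 < γ) :
    Summable fun k : ℕ => exp (-a * log k ^ γ) := by
  refine summable_of_isBigO_nat (summable_one_div_nat_pow.2 one_lt_two) <|
    Asymptotics.IsBigO.of_bound 1 ?_
  filter_upwards [eventually_log_le_mul_log_rpow (half_pos ha) hγ, eventually_ge_atTop 1]
    with k hk hk1
  have hk0 : (0 : ℝ) < k := by exact_mod_cast hk1
  -- `exp (-a log^γ k) ≤ exp (-2 log k) = 1 / k ^ 2`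
  rw [norm_of_nonneg (exp_pos _).le, one_mul, norm_of_nonneg (by positivity),
    ← exp_log hk0, ← exp_nat_mul, one_div, ← exp_neg, exp_log hk0]
  exact exp_le_exp.2 (by push_cast; linarith)

lemma exists_forall_le_mul_exp_neg_of_eventually {p : ℕ → ℝ} (hp : ∀ k, p k ≤ 1)
    {a γ E : ℝ} (ha : 0 ≤ a) (hγ : 0 ≤ γ)
    (h : ∀ᶠ k in atTop, p k ≤ E * exp (-a * log k ^ γ)) :
    ∃ E' ≥ 0, ∀ k, p k ≤ E' * exp (-a * log k ^ γ) := by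
  obtain ⟨N, hN⟩ := eventually_atTop.1 h
  refine ⟨max E (exp (a * log N ^ γ)), (exp_pos _).le.trans (le_max_right _ _), fun k => ?_⟩
  rcases le_total N k with hk | hk
  · exact (hN k hk).trans (by gcongr; exact le_max_left _ _)
  · calc p k ≤ 1 := hp k
      _ = exp (a * log N ^ γ) * exp (-a * log N ^ γ) := by rw [← exp_add]; simp
      _ ≤ max E (exp (a * log N ^ γ)) * exp (-a * log k ^ γ) := by
          gcongr ?_ * exp ?_
          · exact le_max_right _ _
          · have := log_rpow_mono hγ hk
            nlinarith

-- `log (max |x| 1)` is `log⁺ |x|`.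
noncomputable def stretchedExpWeight (K γ x : ℝ) : ℝ := exp (K * log (max |x| 1) ^ γ)

section Weight

variable {K γ : ℝ}

lemma stretchedExpWeight_neg (x : ℝ) : stretchedExpWeight K γ (-x) = stretchedExpWeight K γ x := by
  simp [stretchedExpWeight]

lemma stretchedExpWeight_of_one_le {x : ℝ} (hx : 1 ≤ x) :
    stretchedExpWeight K γ x = exp (K * log x ^ γ) := by
  rw [stretchedExpWeight, abs_of_nonneg (by linarith), max_eq_left hx]

lemma stretchedExpWeight_mono (hK : 0 ≤ K) (hγ : 0 ≤ γ) {x y : ℝ} (h : |x| ≤ |y|) :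
    stretchedExpWeight K γ x ≤ stretchedExpWeight K γ y := by
  unfold stretchedExpWeight
  gcongr
  exact log_nonneg (le_max_right _ _)

lemma exists_sq_le_mul_stretchedExpWeight (hK : 0 < K) (hγ : 1 < γ) :
    ∃ D > 0, ∀ x : ℝ, x ^ 2 ≤ D * stretchedExpWeight K γ x := by
  obtain ⟨u₀, hu₀⟩ := eventually_atTop.1 (eventually_le_mul_rpow (half_pos hK) hγ)
  refine ⟨exp (2 * max u₀ 0), exp_pos _, fun x => ?_⟩
  set u := log (max |x| 1)
  have hm : 0 < max |x| 1 := lt_of_lt_of_le one_pos (le_max_right _ _)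
  have hu : 2 * u ≤ 2 * max u₀ 0 + K * u ^ γ := by
    have : 0 ≤ K * u ^ γ := mul_nonneg hK.le (rpow_nonneg (log_nonneg (le_max_right _ _)) γ)
    rcases le_total u₀ u with h | h
    · linarith [hu₀ u h, le_max_right u₀ 0]
    · linarith [le_max_left u₀ 0]
  calc x ^ 2 ≤ max |x| 1 ^ 2 := by
        rw [← sq_abs]; gcongr; exact le_max_left _ _
    _ = exp (2 * u) := by rw [mul_comm, exp_mul, exp_log hm]; norm_cast
    _ ≤ exp (2 * max u₀ 0 + K * u ^ γ) := exp_le_exp.2 hu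
    _ = exp (2 * max u₀ 0) * stretchedExpWeight K γ x := exp_add _ _

end Weight

noncomputable def truncate (T x : ℝ) : ℝ := if |x| ≤ T then x else 0

section Truncate

variable {T : ℝ}

lemma measurable_truncate (T : ℝ) : Measurable (truncate T) :=
  Measurable.ite (measurableSet_le measurable_abs measurable_const) measurable_id measurable_const

lemma truncate_of_abs_le {x : ℝ} (h : |x| ≤ T) : truncate T x = x := if_pos h

lemma abs_truncate_le (hT : 0 ≤ T) (x : ℝ) : |truncate T x| ≤ T := by
  unfold truncate; split_ifs with h <;> simp [h, hT]

lemma abs_sub_truncate_le (hT : 0 < T) (x : ℝ) : |x - truncate T x| ≤ x ^ 2 / T := by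
  unfold truncate
  split_ifs with h
  · simp only [sub_self, abs_zero]; positivity
  · rw [sub_zero, le_div_iff₀ hT, ← sq_abs]
    nlinarith [abs_nonneg x]

end Truncate

section Probability

variable {Ω : Type*} [MeasurableSpace Ω] {P : Measure Ω} [IsProbabilityMeasure P]

lemma measureReal_lt_abs_le {Y : Ω → ℝ} {K γ : ℝ} (hK : 0 ≤ K) (hγ : 0 ≤ γ)
    (hY : Integrable (fun ω => stretchedExpWeight K γ (Y ω)) P) {T : ℝ} (hT : 1 ≤ T) :
    P.real {ω | T < |Y ω|} ≤ (∫ ω, stretchedExpWeight K γ (Y ω) ∂P) * exp (-(K * log T ^ γ)) := by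
  have hmarkov := mul_meas_ge_le_integral_of_nonneg
    (ae_of_all _ fun ω => (exp_pos _).le) hY (stretchedExpWeight K γ T)
  rw [stretchedExpWeight_of_one_le hT] at hmarkov
  rw [exp_neg, ← div_eq_mul_inv, le_div_iff₀ (exp_pos _), mul_comm]
  refine le_trans (mul_le_mul_of_nonneg_left (measureReal_mono fun ω hω => ?_) (exp_pos _).le)
    hmarkov
  have hω : T < |Y ω| := hω
  show exp (K * log T ^ γ) ≤ _
  rw [← stretchedExpWeight_of_one_le hT]
  exact stretchedExpWeight_mono hK hγ (by rw [abs_of_nonneg (by linarith)]; exact hω.le)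

lemma abs_integral_truncate_le {Y : Ω → ℝ} {g : ℝ → ℝ} (hY : Measurable Y)
    (hint : Integrable Y P) (hmean : ∫ ω, Y ω ∂P = 0) (hg : ∀ x, x ^ 2 ≤ g x)
    (hgY : Integrable (fun ω => g (Y ω)) P) {T : ℝ} (hT : 0 < T) :
    |∫ ω, truncate T (Y ω) ∂P| ≤ (∫ ω, g (Y ω) ∂P) / T := by
  have htrunc : Integrable (fun ω => truncate T (Y ω)) P :=
    Integrable.of_bound ((measurable_truncate T).comp hY).aestronglyMeasurable T
      (ae_of_all _ fun ω => abs_truncate_le hT.le (Y ω))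
  -- since `Y` is centred, `E[truncate T Y] = -E[Y - truncate T Y]`
  calc |∫ ω, truncate T (Y ω) ∂P| = |∫ ω, (Y ω - truncate T (Y ω)) ∂P| := by
        rw [integral_sub hint htrunc, hmean, zero_sub, abs_neg]
    _ ≤ ∫ ω, |Y ω - truncate T (Y ω)| ∂P := abs_integral_le_integral_abs
    _ ≤ ∫ ω, g (Y ω) / T ∂P := integral_mono (hint.sub htrunc).abs (hgY.div_const T)
        fun ω => (abs_sub_truncate_le hT _).trans (by gcongr; exact hg _)
    _ = (∫ ω, g (Y ω) ∂P) / T := integral_div _ _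

lemma measureReal_sum_range_ge_le_of_abs_le {Y : ℕ → Ω → ℝ} (hY : ∀ i, Measurable (Y i))
    (hindep : iIndepFun Y P) {T : ℝ} (hbound : ∀ i ω, |Y i ω| ≤ T) (k : ℕ) {t : ℝ}
    (ht : ∑ i ∈ range k, ∫ ω, Y i ω ∂P ≤ t) :
    P.real {ω | t ≤ ∑ i ∈ range k, Y i ω} ≤
      exp (-(t - ∑ i ∈ range k, ∫ ω, Y i ω ∂P) ^ 2 / (2 * k * T ^ 2)) := by
  set Z : ℕ → Ω → ℝ := fun i ω => Y i ω - ∫ ω, Y i ω ∂P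
  have hZ : ∀ i < k, HasSubgaussianMGF (Z i) ((‖T - -T‖₊ / 2) ^ 2) P := fun i _ =>
    hasSubgaussianMGF_of_mem_Icc (hY i).aemeasurable
      (ae_of_all _ fun ω => abs_le.1 (hbound i ω))
  have hZindep : iIndepFun Z P :=
    hindep.comp (fun i x => x - ∫ ω, Y i ω ∂P) fun i => measurable_id.sub_const _
  have hparam : (((‖T - -T‖₊ / 2) ^ 2 : NNReal) : ℝ) = T ^ 2 := by
    simp [sub_neg_eq_add, ← two_mul]
  have hset : {ω | t ≤ ∑ i ∈ range k, Y i ω} =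
      {ω | t - ∑ i ∈ range k, ∫ ω, Y i ω ∂P ≤ ∑ i ∈ range k, Z i ω} := by
    ext ω
    simp [Z, Finset.sum_sub_distrib]
  have := HasSubgaussianMGF.measure_sum_range_ge_le_of_iIndepFun hZindep hZ (sub_nonneg.2 ht)
  rwa [hparam, ← hset] at this

lemma measureReal_sum_ge_le_add_truncate (X : ℕ → Ω → ℝ) (T s : ℝ) (k : ℕ) :
    P.real {ω | s ≤ ∑ i ∈ range k, X i ω} ≤
      ∑ i ∈ range k, P.real {ω | T < |X i ω|} +
        P.real {ω | s ≤ ∑ i ∈ range k, truncate T (X i ω)} := by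
  have hsub : {ω | s ≤ ∑ i ∈ range k, X i ω} ⊆
      (⋃ i ∈ range k, {ω | T < |X i ω|}) ∪ {ω | s ≤ ∑ i ∈ range k, truncate T (X i ω)} := by
    intro ω hω
    by_cases h : ∀ i ∈ range k, |X i ω| ≤ T
    · right
      simpa [Finset.sum_congr rfl fun i hi => truncate_of_abs_le (h i hi)] using hω
    · push Not at h
      left
      simpa using h
  calc _ ≤ P.real ((⋃ i ∈ range k, {ω | T < |X i ω|}) ∪
        {ω | s ≤ ∑ i ∈ range k, truncate T (X i ω)}) := measureReal_mono hsub
    _ ≤ _ := (measureReal_union_le _ _).trans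
        (add_le_add_left (measureReal_biUnion_finset_le _ _) _)

lemma sum_integral_truncate_le {X : ℕ → Ω → ℝ} (hmeas : ∀ i, Measurable (X i))
    (hint : ∀ i, Integrable (X i) P) (hmean : ∀ i, ∫ ω, X i ω ∂P = 0) {g : ℝ → ℝ}
    (hg : ∀ x, x ^ 2 ≤ g x) (hgX : ∀ i, Integrable (fun ω => g (X i ω)) P) {C : ℝ}
    (hC : ∀ i, ∫ ω, g (X i ω) ∂P ≤ C) {T : ℝ} (hT : 0 < T) (k : ℕ) :
    ∑ i ∈ range k, ∫ ω, truncate T (X i ω) ∂P ≤ k * (C / T) := by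
  calc _ ≤ ∑ _i ∈ range k, C / T := sum_le_sum fun i _ => (le_abs_self _).trans <|
        (abs_integral_truncate_le (hmeas i) (hint i) (hmean i) hg (hgX i) hT).trans
          (div_le_div_of_nonneg_right (hC i) hT.le)
    _ = k * (C / T) := by simp

lemma sum_measureReal_lt_abs_le {X : ℕ → Ω → ℝ} {K γ M : ℝ} (hK : 0 ≤ K) (hγ : 0 ≤ γ)
    (hexpint : ∀ i, Integrable (fun ω => stretchedExpWeight K γ (X i ω)) P)
    (hM : ∀ i, ∫ ω, stretchedExpWeight K γ (X i ω) ∂P ≤ M) {T : ℝ} (hT : 1 ≤ T) (k : ℕ) :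
    ∑ i ∈ range k, P.real {ω | T < |X i ω|} ≤ k * (M * exp (-(K * log T ^ γ))) := by
  calc _ ≤ ∑ _i ∈ range k, M * exp (-(K * log T ^ γ)) := sum_le_sum fun i _ =>
        (measureReal_lt_abs_le hK hγ (hexpint i) hT).trans (by gcongr; exact hM i)
    _ = _ := by simp

lemma measureReal_sum_truncate_ge_le {X : ℕ → Ω → ℝ} (hmeas : ∀ i, Measurable (X i))
    (hindep : iIndepFun X P) {ε : ℝ} (hε : 0 ≤ ε) {k : ℕ} (hk : 1 ≤ k)
    (hbias : ∑ i ∈ range k, ∫ ω, truncate ((k : ℝ) ^ (4⁻¹ : ℝ)) (X i ω) ∂P ≤ ε * k / 2) :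
    P.real {ω | ε * k ≤ ∑ i ∈ range k, truncate ((k : ℝ) ^ (4⁻¹ : ℝ)) (X i ω)} ≤
      exp (-(ε ^ 2 / 8 * (k : ℝ) ^ (2⁻¹ : ℝ))) := by
  set T := (k : ℝ) ^ (4⁻¹ : ℝ)
  have hk0 : (0 : ℝ) < k := by exact_mod_cast hk
  have hT0 : 0 < T := by positivity
  refine (measureReal_sum_range_ge_le_of_abs_le
    (fun i => (measurable_truncate T).comp (hmeas i))
    (hindep.comp _ fun _ => measurable_truncate T) (fun i ω => abs_truncate_le hT0.le _)
    k (hbias.trans (half_le_self (by positivity)))).trans (exp_le_exp.2 ?_)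
  have hk4 : (k : ℝ) = T ^ 4 := by
    rw [← rpow_natCast, ← rpow_mul hk0.le]; norm_num
  have hk2 : (k : ℝ) ^ (2⁻¹ : ℝ) = T ^ 2 := by
    rw [← rpow_natCast, ← rpow_mul hk0.le]; norm_num
  have hdev : (ε * k / 2) ^ 2 ≤ (ε * k - ∑ i ∈ range k, ∫ ω, truncate T (X i ω) ∂P) ^ 2 :=
    pow_le_pow_left₀ (by positivity) (by linarith) 2
  calc -(ε * k - ∑ i ∈ range k, ∫ ω, truncate T (X i ω) ∂P) ^ 2 / (2 * k * T ^ 2)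
      ≤ -(ε * k / 2) ^ 2 / (2 * k * T ^ 2) := by gcongr
    _ = -(ε ^ 2 / 8 * (k : ℝ) ^ (2⁻¹ : ℝ)) := by rw [hk2, hk4]; field_simp; ring

theorem eventually_measureReal_sum_ge_le {X : ℕ → Ω → ℝ} (hmeas : ∀ i, Measurable (X i))
    (hindep : iIndepFun X P) (hint : ∀ i, Integrable (X i) P)
    (hmean : ∀ i, ∫ ω, X i ω ∂P = 0) {K γ M : ℝ} (hK : 0 < K) (hγ : 1 < γ)
    (hexpint : ∀ i, Integrable (fun ω => stretchedExpWeight K γ (X i ω)) P)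
    (hM : ∀ i, ∫ ω, stretchedExpWeight K γ (X i ω) ∂P ≤ M) {ε : ℝ} (hε : 0 < ε) :
    ∀ᶠ k : ℕ in atTop, P.real {ω | ε * k ≤ ∑ i ∈ range k, X i ω} ≤
      (M + 1) * exp (-(K / (2 * 4 ^ γ)) * log k ^ γ) := by
  obtain ⟨D, hD0, hD⟩ := exists_sq_le_mul_stretchedExpWeight hK hγ
  have hDM : ∀ i, ∫ ω, D * stretchedExpWeight K γ (X i ω) ∂P ≤ D * M := fun i => by
    rw [integral_const_mul]; gcongr; exact hM i
  set a := K / (2 * 4 ^ γ)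
  have ha : 0 < a := by positivity
  have hTlarge : ∀ᶠ k : ℕ in atTop, max 1 (2 * (D * M) / ε) ≤ (k : ℝ) ^ (4⁻¹ : ℝ) :=
    ((tendsto_rpow_atTop (by norm_num)).comp tendsto_natCast_atTop_atTop).eventually_ge_atTop _
  filter_upwards [hTlarge, eventually_log_le_mul_log_rpow ha hγ,
    eventually_mul_log_rpow_le_sqrt (γ := γ) ha (by positivity : 0 < ε ^ 2 / 8),
    eventually_ge_atTop 1] with k hT hlog hsqrt hk
  set T := (k : ℝ) ^ (4⁻¹ : ℝ)
  have hT1 : 1 ≤ T := (le_max_left _ _).trans hT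
  have hk0 : (0 : ℝ) < k := by exact_mod_cast hk
  have hbias : ∑ i ∈ range k, ∫ ω, truncate T (X i ω) ∂P ≤ ε * k / 2 := by
    have hmean_shift : D * M / T ≤ ε / 2 := by
      rw [div_le_iff₀ (by linarith)]
      linarith [(div_le_iff₀ hε).1 ((le_max_right _ _).trans hT)]
    refine (sum_integral_truncate_le hmeas hint hmean hD (fun i => (hexpint i).const_mul D) hDM
      (by linarith) k).trans ?_
    nlinarith
  have htail : ∑ i ∈ range k, P.real {ω | T < |X i ω|} ≤ M * exp (-a * log k ^ γ) := by
    have hlogT : K * log T ^ γ = 2 * a * log k ^ γ := by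
      rw [log_rpow hk0, mul_rpow (by norm_num) (log_natCast_nonneg k), inv_rpow (by norm_num)]
      simp only [a]
      field_simp
    calc _ ≤ k * (M * exp (-(K * log T ^ γ))) :=
          sum_measureReal_lt_abs_le hK.le (by linarith) hexpint hM hT1 k
      _ = M * exp (log k - 2 * a * log k ^ γ) := by
          rw [hlogT, sub_eq_add_neg, exp_add, exp_log hk0]
          ring
      _ ≤ M * exp (-a * log k ^ γ) := by
          have hM0 : 0 ≤ M := (integral_nonneg fun ω => (exp_pos _).le).trans (hM 0)
          gcongr
          linarith
  have hhoeff : P.real {ω | ε * k ≤ ∑ i ∈ range k, truncate T (X i ω)} ≤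
      exp (-a * log k ^ γ) :=
    (measureReal_sum_truncate_ge_le hmeas hindep hε.le hk hbias).trans
      (exp_le_exp.2 (by linarith))
  calc P.real {ω | ε * k ≤ ∑ i ∈ range k, X i ω}
      ≤ ∑ i ∈ range k, P.real {ω | T < |X i ω|} +
          P.real {ω | ε * k ≤ ∑ i ∈ range k, truncate T (X i ω)} :=
        measureReal_sum_ge_le_add_truncate X T (ε * k) k
    _ ≤ M * exp (-a * log k ^ γ) + exp (-a * log k ^ γ) := add_le_add htail hhoeff
    _ = (M + 1) * exp (-a * log k ^ γ) := by ring

theorem eventually_measureReal_lt_abs_sum_le {X : ℕ → Ω → ℝ} (hmeas : ∀ i, Measurable (X i))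
    (hindep : iIndepFun X P) (hint : ∀ i, Integrable (X i) P)
    (hmean : ∀ i, ∫ ω, X i ω ∂P = 0) {K γ M : ℝ} (hK : 0 < K) (hγ : 1 < γ)
    (hexpint : ∀ i, Integrable (fun ω => stretchedExpWeight K γ (X i ω)) P)
    (hM : ∀ i, ∫ ω, stretchedExpWeight K γ (X i ω) ∂P ≤ M) {ε : ℝ} (hε : 0 < ε) :
    ∀ᶠ k : ℕ in atTop, P.real {ω | ε * k < |∑ i ∈ range k, X i ω|} ≤
      2 * (M + 1) * exp (-(K / (2 * 4 ^ γ)) * log k ^ γ) := by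
  have hneg := eventually_measureReal_sum_ge_le (X := fun i ω => -X i ω)
    (fun i => (hmeas i).neg) (hindep.comp (fun _ x => -x) fun _ => measurable_neg)
    (fun i => (hint i).neg) (fun i => by simp [integral_neg, hmean i]) hK hγ
    (by simpa only [stretchedExpWeight_neg] using hexpint)
    (by simpa only [stretchedExpWeight_neg] using hM) hε
  filter_upwards [eventually_measureReal_sum_ge_le hmeas hindep hint hmean hK hγ hexpint hM hε,
    hneg] with k hpos hneg
  have hsub : {ω | ε * k < |∑ i ∈ range k, X i ω|} ⊆
      {ω | ε * k ≤ ∑ i ∈ range k, X i ω} ∪ {ω | ε * k ≤ ∑ i ∈ range k, -X i ω} := by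
    intro ω hω
    have hω : ε * k < |∑ i ∈ range k, X i ω| := hω
    simp only [Set.mem_union, Set.mem_ofPred, sum_neg_distrib]
    exact (lt_abs.1 hω).imp le_of_lt le_of_lt
  linarith [(measureReal_mono (μ := P) hsub).trans (measureReal_union_le _ _)]

theorem exists_measure_biUnion_ge_le {A : ℕ → Set Ω} {a γ E : ℝ} (ha : 0 < a) (hγ : 1 < γ)
    (h : ∀ᶠ k in atTop, P.real (A k) ≤ E * exp (-a * log k ^ γ)) :
    ∃ c > 0, ∀ n : ℕ, P (⋃ k ≥ n, A k) ≤ ENNReal.ofReal (c⁻¹ * exp (-c * log n ^ γ)) := by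
  obtain ⟨E', hE'0, hE'⟩ := exists_forall_le_mul_exp_neg_of_eventually
    (fun k => measureReal_le_one) ha.le (by linarith) h
  have hS := summable_exp_neg_mul_log_rpow (half_pos ha) hγ
  set S := ∑' k : ℕ, exp (-(a / 2) * log k ^ γ)
  have hS0 : 0 ≤ S := tsum_nonneg fun k => (exp_pos _).le
  set c := min (a / 2) (E' * S + 1)⁻¹
  have hc0 : 0 < c := by positivity
  refine ⟨c, hc0, fun n => ?_⟩
  set e : ℕ → ℝ := fun k => exp (-(a / 2) * log k ^ γ)
  have hterm : ∀ k, P (⋃ (_ : k ≥ n), A k) ≤ ENNReal.ofReal (E' * e n * e k) := by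
    intro k
    by_cases hk : n ≤ k
    · simp only [ge_iff_le, hk, Set.iUnion_true]
      rw [← ofReal_measureReal]
      refine ENNReal.ofReal_le_ofReal ((hE' k).trans ?_)
      rw [mul_assoc, ← exp_add]
      have := mul_le_mul_of_nonneg_left (log_rpow_mono (γ := γ) (by linarith) hk) ha.le
      gcongr
      linarith
    · simp [hk]
  have hc : E' * e n * S ≤ c⁻¹ * exp (-c * log n ^ γ) := by
    rw [mul_right_comm]
    gcongr
    · exact (lt_add_one _).le.trans ((le_inv_comm₀ hc0 (by positivity)).1 (min_le_right _ _))
    · refine exp_le_exp.2 (mul_le_mul_of_nonneg_right ?_ (rpow_nonneg (log_natCast_nonneg n) γ))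
      exact neg_le_neg (min_le_left _ _)
  calc P (⋃ k ≥ n, A k) ≤ ∑' k, P (⋃ (_ : k ≥ n), A k) := measure_iUnion_le _
    _ ≤ ∑' k, ENNReal.ofReal (E' * e n * e k) := ENNReal.tsum_le_tsum hterm
    _ = ENNReal.ofReal (E' * e n * S) := by
        rw [← ENNReal.ofReal_tsum_of_nonneg (fun k => by positivity) (hS.mul_left _),
          tsum_mul_left]
    _ ≤ _ := ENNReal.ofReal_le_ofReal hc

end Probability

theorem stmt9 {Ω : Type*} [MeasurableSpace Ω] (P : Measure Ω) [IsProbabilityMeasure P]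
    (X : ℕ → Ω → ℝ) (hmeas : ∀ i, Measurable (X i))
    (hindep : iIndepFun X P)
    (hint : ∀ i, Integrable (X i) P)
    (hmean : ∀ i, ∫ ω, X i ω ∂P = 0)
    (K γ : ℝ) (hK : 0 < K) (hγ : 1 < γ)
    (hexpint : ∀ i, Integrable (fun ω => Real.exp (K * Real.log (max |X i ω| 1) ^ γ)) P)
    (M : ℝ) (hM : ∀ i, ∫ ω, Real.exp (K * Real.log (max |X i ω| 1) ^ γ) ∂P ≤ M) :
    ∀ ε : ℝ, 0 < ε → ∃ c : ℝ, 0 < c ∧ ∀ n : ℕ, 1 ≤ n →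
      P {ω | ∃ k : ℕ, n ≤ k ∧ ε * k < |∑ i ∈ Finset.range k, X i ω|} ≤
        ENNReal.ofReal (c⁻¹ * Real.exp (-c * Real.log n ^ γ)) := by
  intro ε hε
  obtain ⟨c, hc, hbound⟩ := exists_measure_biUnion_ge_le (by positivity) hγ
    (eventually_measureReal_lt_abs_sum_le hmeas hindep hint hmean hK hγ hexpint hM hε)
  refine ⟨c, hc, fun n _ => ?_⟩
  have hset : {ω | ∃ k : ℕ, n ≤ k ∧ ε * k < |∑ i ∈ Finset.range k, X i ω|} =
      ⋃ k ≥ n, {ω | ε * k < |∑ i ∈ Finset.range k, X i ω|} := by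
    ext ω
    simp
  rw [hset]
  exact hbound n
end
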